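/- Let k ≥ 2 be an integer and c > 1 a non-integer, and suppose hypothesis (PSW) holds with constant 0 < P(c,k) ≤ 1/(ck). Let ω be a real number. Then there is a constant C such that uniformly for α ∈ [0,1) and for every ε > 0, for all x ≥ 2: | ∑_{n≤x} n^{ω−1/(ck)} 1_{N_(c)^k}(n) e(nα) − (1/c) ∑_{n≤x} n^{ω−1/k} 1_{N^k}(n) e(nα) | ≤ C_ε·x^{max{ω − P(c,k), 0} + ε}. -/

import Mathlib

open MeasureTheory Filter Finset Set

noncomputable section

/-- `e(α) = exp(2πiα)`. -/
def eR (α : ℝ) : ℂ := Complex.exp (2 * Real.pi * Complex.I * α)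

/-- The Piatetski-Shapiro set `N_(c) = {⌊n^c⌋ : n ∈ ℕ, n ≥ 1}`. -/
def NPS (c : ℝ) : Set ℕ := {m | ∃ n : ℕ, 1 ≤ n ∧ m = ⌊(n : ℝ) ^ c⌋₊}

/-- `H₀(c)` for non-integral real `c > 1`. -/
def H0c (c : ℝ) : ℝ :=
  if c < 2 then 2 else ((⌊2 * c⌋ : ℝ) + 1) * ((⌊2 * c⌋ : ℝ) + 2) / 2

/-- `H₀(k)` for a positive integer `k`. -/
def H0k (k : ℕ) : ℕ :=
  if k ≤ 4 then 2 ^ (k - 1) else k * (k - 1) / 2 + Nat.sqrt (2 * k + 2)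

/-- `k`-th powers of positive integers. -/
def Npow (k : ℕ) : Set ℕ := {m | ∃ n : ℕ, 1 ≤ n ∧ m = n ^ k}

/-- `k`-th powers of Piatetski-Shapiro numbers. -/
def NPSpow (c : ℝ) (k : ℕ) : Set ℕ := {m | ∃ n ∈ NPS c, m = n ^ k}

/-- `k`-th powers of primes. -/
def Ppow (k : ℕ) : Set ℕ := {m | ∃ p : ℕ, p.Prime ∧ m = p ^ k}

/-- `k`-th powers of Piatetski-Shapiro primes. -/
def PPSpow (c : ℝ) (k : ℕ) : Set ℕ := {m | ∃ p ∈ NPS c, p.Prime ∧ m = p ^ k}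

/-- The representation function `r_{A,h}(n)`: the number of ordered `h`-tuples
from `A` summing to `n`. -/
def rep (A : Set ℕ) (h n : ℕ) : ℕ :=
  Nat.card {x : Fin h → ℕ // (∀ i, x i ∈ A) ∧ ∑ i, x i = n}

open scoped Classical in
/-- The finite set of ordered `h`-tuples of elements of `A` summing to `N`. -/
def tuples (A : Set ℕ) (h N : ℕ) : Finset (Fin h → ℕ) :=
  (Fintype.piFinset fun _ : Fin h => Finset.range (N + 1)).filter
    (fun x => (∀ i, x i ∈ A) ∧ ∑ i, x i = N)

/-- Weighted exponential sum `∑_{1 ≤ n ≤ x, n ∈ A} w(n) e(nα)`. -/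
def expSum (A : Set ℕ) (w : ℕ → ℝ) (α x : ℝ) : ℂ :=
  ∑ n ∈ Finset.Icc 1 ⌊x⌋₊, ((Set.indicator A w n : ℝ) : ℂ) * eR (n * α)

/-- Weighted exponential sum `∑_{y ≤ n ≤ x, n ∈ A} w(n) e(nα)`. -/
def expSumI (A : Set ℕ) (w : ℕ → ℝ) (α y x : ℝ) : ℂ :=
  ∑ n ∈ Finset.Icc ⌈y⌉₊ ⌊x⌋₊, ((Set.indicator A w n : ℝ) : ℂ) * eR (n * α)

/-- Distance to the nearest integer. -/
def distInt (α : ℝ) : ℝ := |α - (round α : ℝ)|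

/-- The major arc `𝔐 = {α ∈ [0,1] : ‖α‖ ≤ N^ν / N}`. -/
def MajorArc (ν : ℝ) (N : ℕ) : Set ℝ :=
  {α ∈ Set.Icc (0:ℝ) 1 | distInt α ≤ (N : ℝ) ^ ν / N}

/-- The minor arc `𝔪 = [0,1] ∖ 𝔐`. -/
def MinorArc (ν : ℝ) (N : ℕ) : Set ℝ := Set.Icc (0:ℝ) 1 \ MajorArc ν N

/-- `T(α;x) = ∑_{n≤x} n^{ω-1/c} 1_{N_(c)}(n) e(nα)`. -/
def Tc (c ω : ℝ) (α x : ℝ) : ℂ := expSum (NPS c) (fun n => (n : ℝ) ^ (ω - 1 / c)) α x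

/-- `T^♯(α;x) = ∑_{x/h≤n≤x} n^{ω-1/c} 1_{N_(c)}(n) e(nα)`. -/
def TcSharp (c ω : ℝ) (h : ℕ) (α x : ℝ) : ℂ :=
  expSumI (NPS c) (fun n => (n : ℝ) ^ (ω - 1 / c)) α (x / h) x

/-- `U(α;x) = ∑_{n≤x} n^{ω-1} e(nα)`. -/
def Uc (ω : ℝ) (α x : ℝ) : ℂ :=
  ∑ n ∈ Finset.Icc 1 ⌊x⌋₊, (((n : ℝ) ^ (ω - 1) : ℝ) : ℂ) * eR (n * α)

/-- `U^♯(α;x) = ∑_{x/h≤n≤x} n^{ω-1} e(nα)`. -/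
def UcSharp (ω : ℝ) (h : ℕ) (α x : ℝ) : ℂ :=
  ∑ n ∈ Finset.Icc ⌈x / h⌉₊ ⌊x⌋₊, (((n : ℝ) ^ (ω - 1) : ℝ) : ℂ) * eR (n * α)

/-- The complete Gauss-type sum `S(a,q) = ∑_{r=1}^q e(a r^k / q)`. -/
def Swar (k a q : ℕ) : ℂ := ∑ r ∈ Finset.Icc 1 q, eR (((a * r ^ k : ℕ) : ℝ) / q)

/-- The singular series of Waring's problem. -/
def SingSer (k h n : ℕ) : ℝ :=
  (∑' q : ℕ, ∑ a ∈ (Finset.Icc 1 q).filter (fun a => Nat.gcd a q = 1),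
      (Swar k a q / (q : ℂ)) ^ h * eR (-(((n * a : ℕ) : ℝ) / q))).re

/-- The restricted Gauss-type sum `S*(q,a) = ∑_{1≤r≤q, (r,q)=1} e(a r^k / q)`. -/
def SwarStar (k a q : ℕ) : ℂ :=
  ∑ r ∈ (Finset.Icc 1 q).filter (fun r => Nat.gcd r q = 1), eR (((a * r ^ k : ℕ) : ℝ) / q)

/-- The singular series of the Waring–Goldbach problem. -/
def SingSerStar (k h n : ℕ) : ℝ :=
  (∑' q : ℕ, ∑ a ∈ (Finset.Icc 1 q).filter (fun a => Nat.gcd a q = 1),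
      (SwarStar k a q / (Nat.totient q : ℂ)) ^ h * eR (-(((n * a : ℕ) : ℝ) / q))).re

/-- `K(k) = ∏_{(p-1) ∣ k} p^{ν(k,p)}`. -/
def Kk (k : ℕ) : ℕ :=
  ∏ p ∈ (Finset.range (k + 2)).filter (fun p => p.Prime ∧ (p - 1) ∣ k),
    p ^ (k.factorization p + if p = 2 ∧ 2 ∣ k then 2 else 1)

/-- A measurable positive function is regularly varying if `F(λx)/F(x)` converges
to a positive limit for every `λ > 0`. -/
def RegularlyVarying (F : ℝ → ℝ) : Prop :=
  Measurable F ∧ ∀ l : ℝ, 0 < l → ∃ L : ℝ, 0 < L ∧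
    Filter.Tendsto (fun x => F (l * x) / F x) Filter.atTop (nhds L)

/-- Hypothesis (PSW). -/
def PSW (c : ℝ) (k : ℕ) (P : ℝ) : Prop :=
  ∃ C : ℝ, ∀ α ∈ Set.Ico (0:ℝ) 1, ∀ x : ℝ, 2 ≤ x →
    ‖(expSum (NPSpow c k) (fun _ => 1) α x
      - (1 / c) * expSum (Npow k) (fun n => (n : ℝ) ^ ((1 / c - 1) / k)) α x)‖
      ≤ C * x ^ (1 / (c * k) - P)

/-- Hypothesis (PSWG). -/
def PSWG (c : ℝ) (k : ℕ) (P : ℝ) : Prop :=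
  ∃ C : ℝ, ∀ α ∈ Set.Ico (0:ℝ) 1, ∀ x : ℝ, 2 ≤ x →
    ‖(expSum (PPSpow c k) (fun n => Real.log n) α x
      - (1 / c) * expSum (Ppow k) (fun n => (n : ℝ) ^ ((1 / c - 1) / k) * Real.log n) α x)‖
      ≤ C * x ^ (1 / (c * k) - P)

/-! Partial summation. With `β = ω - 1/(ck)` the weighted difference is `∑_{n ≤ x} n^β g(n)`,
where the partial sums of `g` are exactly the differences bounded by (PSW), so they are
`≪ m^θ` with `θ = 1/(ck) - P`. Abel summation together with `(n+1)^β - n^β ≪ n^(β-1)` bounds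
the sum by `x^(β+θ) + ∑_{n < x} n^(β+θ-1) ≪_ε x^(max (β+θ) 0 + ε)`, and `β + θ = ω - P`. -/

theorem Finset.sum_Icc_one_by_parts {R M : Type*} [Ring R] [AddCommGroup M] [Module R M]
    (f : ℕ → R) (g : ℕ → M) (N : ℕ) :
    ∑ n ∈ Finset.Icc 1 N, f n • g n =
      f N • ∑ n ∈ Finset.Icc 1 N, g n
        - ∑ n ∈ Finset.Ico 1 N, (f (n + 1) - f n) • ∑ m ∈ Finset.Icc 1 n, g m := by
  induction N with
  | zero => simp
  | succ N ih =>
    rcases N.eq_zero_or_pos with rfl | hN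
    · simp
    rw [Finset.sum_Icc_succ_top (by omega), ih, Finset.sum_Ico_succ_top hN,
      Finset.sum_Icc_succ_top (by omega), smul_add, sub_smul]
    abel

theorem Real.abs_rpow_add_one_sub_rpow_le (β : ℝ) {a : ℝ} (ha : 1 ≤ a) :
    |(a + 1) ^ β - a ^ β| ≤ |β| * 2 ^ max (β - 1) 0 * a ^ (β - 1) := by
  have ha0 : 0 < a := by linarith
  have hderiv_le : ∀ t ∈ Set.Ico a (a + 1),
      ‖β * t ^ (β - 1)‖ ≤ |β| * 2 ^ max (β - 1) 0 * a ^ (β - 1) := by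
    intro t ht
    have ht0 : 0 < t := ha0.trans_le ht.1
    rw [Real.norm_eq_abs, abs_mul, abs_of_nonneg (Real.rpow_nonneg ht0.le _), mul_assoc]
    gcongr
    rcases le_or_gt β 1 with hβ | hβ
    · rw [max_eq_right (by linarith), Real.rpow_zero, one_mul]
      exact Real.rpow_le_rpow_of_nonpos ha0 ht.1 (by linarith)
    · rw [max_eq_left (by linarith), ← Real.mul_rpow (by norm_num) ha0.le]
      exact Real.rpow_le_rpow ht0.le (by linarith [ht.2.le]) (by linarith)
  simpa using norm_image_sub_le_of_norm_deriv_le_segment' (f := fun t : ℝ => t ^ β)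
    (fun t ht => (Real.hasDerivAt_rpow_const
      (Or.inl (ha0.trans_le ht.1).ne')).hasDerivWithinAt) hderiv_le (a + 1) (by simp)

theorem Real.mul_rpow_sub_one_le_rpow_sub_rpow {δ x : ℝ} (hδ0 : 0 ≤ δ) (hδ1 : δ ≤ 1)
    (hx : 1 ≤ x) : δ * x ^ (δ - 1) ≤ x ^ δ - (x - 1) ^ δ := by
  have hx0 : 0 < x := by linarith
  have hbernoulli := rpow_one_add_le_one_add_mul_self (s := -x⁻¹)
    (by rw [neg_le_neg_iff]; exact inv_le_one_of_one_le₀ hx) hδ0 hδ1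
  have hfactor : x - 1 = x * (1 + -x⁻¹) := by field_simp; ring
  rw [hfactor, Real.mul_rpow hx0.le (by linarith [inv_le_one_of_one_le₀ hx]),
    Real.rpow_sub_one hx0.ne']
  have := mul_le_mul_of_nonneg_left hbernoulli (Real.rpow_nonneg hx0.le δ)
  linarith [show x ^ δ * (1 + δ * -x⁻¹) = x ^ δ - δ * (x ^ δ / x) by ring]

theorem Real.sum_Icc_rpow_sub_one_le {δ : ℝ} (hδ : 0 < δ) (N : ℕ) :
    ∑ n ∈ Finset.Icc 1 N, (n : ℝ) ^ (δ - 1) ≤ N ^ δ / min δ 1 := by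
  rcases le_or_gt 1 δ with hδ1 | hδ1
  · rw [min_eq_right hδ1, div_one]
    calc ∑ n ∈ Finset.Icc 1 N, (n : ℝ) ^ (δ - 1)
        ≤ ∑ _n ∈ Finset.Icc 1 N, (N : ℝ) ^ (δ - 1) := by
          refine Finset.sum_le_sum fun n hn => ?_
          rw [Finset.mem_Icc] at hn
          exact Real.rpow_le_rpow (by positivity) (by exact_mod_cast hn.2) (by linarith)
      _ ≤ N ^ δ := by
          rcases N.eq_zero_or_pos with rfl | hN
          · simp [Real.zero_rpow hδ.ne']
          rw [Finset.sum_const, Nat.card_Icc, Nat.add_sub_cancel, nsmul_eq_mul,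
            ← Real.rpow_one_add' (by positivity) (by linarith), add_sub_cancel]
  · rw [min_eq_left hδ1.le, le_div_iff₀ hδ, mul_comm]
    induction N with
    | zero => simp [Real.zero_rpow hδ.ne']
    | succ N ih =>
      rw [Finset.sum_Icc_succ_top (by omega), mul_add]
      have hstep := Real.mul_rpow_sub_one_le_rpow_sub_rpow hδ.le hδ1.le
        (x := ((N + 1 : ℕ) : ℝ)) (by simp)
      push_cast at hstep ⊢
      rw [add_sub_cancel_right] at hstep
      linarith

theorem norm_sum_Icc_rpow_smul_le {E : Type*} [NormedAddCommGroup E] [NormedSpace ℝ E]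
    {β θ δ C : ℝ} (hδ : 0 < δ) (hβθ : β + θ ≤ δ) (g : ℕ → E)
    (hg : ∀ m, 1 ≤ m → ‖∑ n ∈ Finset.Icc 1 m, g n‖ ≤ C * (m : ℝ) ^ θ) (N : ℕ) :
    ‖∑ n ∈ Finset.Icc 1 N, (n : ℝ) ^ β • g n‖
      ≤ C * (1 + |β| * 2 ^ max (β - 1) 0 / min δ 1) * (N : ℝ) ^ δ := by
  set K := |β| * 2 ^ max (β - 1) 0
  have hC : 0 ≤ C := by simpa using (norm_nonneg _).trans (hg 1 le_rfl)
  rcases N.eq_zero_or_pos with rfl | hN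
  · simp [Real.zero_rpow hδ.ne']
  have hterm : ∀ n ∈ Finset.Ico 1 N,
      ‖(((n + 1 : ℕ) : ℝ) ^ β - (n : ℝ) ^ β) • ∑ m ∈ Finset.Icc 1 n, g m‖
        ≤ K * C * (n : ℝ) ^ (δ - 1) := by
    intro n hn
    have hn1 : (1 : ℝ) ≤ n := by exact_mod_cast (Finset.mem_Ico.1 hn).1
    rw [norm_smul, Real.norm_eq_abs, Nat.cast_succ]
    calc |((n : ℝ) + 1) ^ β - (n : ℝ) ^ β| * ‖∑ m ∈ Finset.Icc 1 n, g m‖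
        ≤ (K * (n : ℝ) ^ (β - 1)) * (C * (n : ℝ) ^ θ) :=
          mul_le_mul (Real.abs_rpow_add_one_sub_rpow_le β hn1)
            (hg n (Finset.mem_Ico.1 hn).1) (norm_nonneg _) (by positivity)
      _ = K * C * (n : ℝ) ^ (β + θ - 1) := by
          rw [mul_mul_mul_comm, ← Real.rpow_add (by linarith)]; ring_nf
      _ ≤ K * C * (n : ℝ) ^ (δ - 1) := by
          gcongr
  have hN1 : (1 : ℝ) ≤ N := by exact_mod_cast hN
  rw [Finset.sum_Icc_one_by_parts]
  calc _ ≤ (N : ℝ) ^ β * (C * (N : ℝ) ^ θ) + ∑ n ∈ Finset.Ico 1 N, K * C * (n : ℝ) ^ (δ - 1) := by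
        refine (norm_sub_le _ _).trans (add_le_add ?_ ((norm_sum_le _ _).trans
          (Finset.sum_le_sum hterm)))
        rw [norm_smul, Real.norm_of_nonneg (by positivity)]
        gcongr
        exact hg N hN
    _ = C * (N : ℝ) ^ (β + θ) + K * C * ∑ n ∈ Finset.Ico 1 N, (n : ℝ) ^ (δ - 1) := by
        rw [← Finset.mul_sum, mul_left_comm, ← Real.rpow_add (by linarith)]
    _ ≤ C * (N : ℝ) ^ δ + K * C * ((N : ℝ) ^ δ / min δ 1) := by
        gcongr
        exact (Finset.sum_le_sum_of_subset_of_nonneg Finset.Ico_subset_Icc_self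
            fun _ _ _ => by positivity).trans (Real.sum_Icc_rpow_sub_one_le hδ N)
    _ = C * (1 + K / min δ 1) * (N : ℝ) ^ δ := by ring

theorem norm_eR (t : ℝ) : ‖eR t‖ = 1 := by
  rw [eR, show 2 * Real.pi * Complex.I * t = ((2 * Real.pi * t : ℝ) : ℂ) * Complex.I by
    push_cast; ring]
  exact Complex.norm_exp_ofReal_mul_I _

theorem norm_expSum_le (A : Set ℕ) (w : ℕ → ℝ) (α x : ℝ) :
    ‖expSum A w α x‖ ≤ ∑ n ∈ Finset.Icc 1 ⌊x⌋₊, |w n| := by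
  refine (norm_sum_le _ _).trans (Finset.sum_le_sum fun n _ => ?_)
  rw [norm_mul, norm_eR, mul_one, Complex.norm_real]
  exact norm_indicator_le_norm_self w n

theorem expSum_congr_weight (A : Set ℕ) {w w' : ℕ → ℝ} (h : ∀ n, 1 ≤ n → w n = w' n)
    (α x : ℝ) : expSum A w α x = expSum A w' α x :=
  Finset.sum_congr rfl fun n hn => by
    unfold Set.indicator
    rw [h n (Finset.mem_Icc.1 hn).1]

theorem expSum_rpow_mul (A : Set ℕ) (β : ℝ) (w : ℕ → ℝ) (α x : ℝ) :
    expSum A (fun n => (n : ℝ) ^ β * w n) α x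
      = ∑ n ∈ Finset.Icc 1 ⌊x⌋₊, (n : ℝ) ^ β • (((A.indicator w n : ℝ) : ℂ) * eR (n * α)) :=
  Finset.sum_congr rfl fun n _ => by
    rw [Set.indicator_mul_right, Complex.real_smul, Complex.ofReal_mul, mul_assoc]

theorem expSum_sub_mul_expSum (A B : Set ℕ) (v w : ℕ → ℝ) (a : ℂ) (α x : ℝ) :
    expSum A v α x - a * expSum B w α x
      = ∑ n ∈ Finset.Icc 1 ⌊x⌋₊,
          (((A.indicator v n : ℝ) : ℂ) * eR (n * α)
            - a * (((B.indicator w n : ℝ) : ℂ) * eR (n * α))) := by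
  rw [expSum, expSum, Finset.mul_sum, Finset.sum_sub_distrib]

theorem PSW.exists_norm_le_of_one_le {c : ℝ} {k : ℕ} {P : ℝ} (h : PSW c k P) :
    ∃ C, ∀ α ∈ Set.Ico (0 : ℝ) 1, ∀ m : ℕ, 1 ≤ m →
      ‖expSum (NPSpow c k) (fun _ => 1) α m
        - (1 / c) * expSum (Npow k) (fun n => (n : ℝ) ^ ((1 / c - 1) / k)) α m‖
        ≤ C * (m : ℝ) ^ (1 / (c * k) - P) := by
  obtain ⟨C₀, hC₀⟩ := h
  refine ⟨max C₀ (1 + ‖(1 / c : ℂ)‖), fun α hα m hm => ?_⟩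
  rcases hm.eq_or_lt with rfl | hm2
  · have h₁ : ‖expSum (NPSpow c k) (fun _ => 1) α (1 : ℕ)‖ ≤ 1 :=
      (norm_expSum_le _ _ _ _).trans (by simp)
    have h₂ : ‖expSum (Npow k) (fun n => (n : ℝ) ^ ((1 / c - 1) / k)) α (1 : ℕ)‖ ≤ 1 :=
      (norm_expSum_le _ _ _ _).trans (by simp)
    calc _ ≤ 1 + ‖(1 / c : ℂ)‖ * 1 :=
          (norm_sub_le _ _).trans (by grw [norm_mul_le, h₁, h₂])
      _ ≤ _ := by simp
  · exact (hC₀ α hα m (by exact_mod_cast hm2)).trans (by gcongr; exact le_max_left _ _)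

theorem stmt12_general (k : ℕ) (c : ℝ)
    (P : ℝ) (hPSW : PSW c k P)
    (ω : ℝ) :
    ∀ ε > (0:ℝ), ∃ C > (0:ℝ), ∀ α ∈ Set.Ico (0:ℝ) 1, ∀ x : ℝ, 2 ≤ x →
      ‖(expSum (NPSpow c k) (fun n => (n : ℝ) ^ (ω - 1 / (c * k))) α x
          - (1 / c) * expSum (Npow k) (fun n => (n : ℝ) ^ (ω - 1 / k)) α x)‖
        ≤ C * x ^ (max (ω - P) 0 + ε) := by
  obtain ⟨C₁, hC₁⟩ := hPSW.exists_norm_le_of_one_le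
  intro ε hε
  set β := ω - 1 / (c * k) with hβ
  set δ := max (ω - P) 0 + ε
  have hδ : 0 < δ := by positivity
  refine ⟨max C₁ 1 * (1 + |β| * 2 ^ max (β - 1) 0 / min δ 1), by positivity,
    fun α hα x hx => ?_⟩
  have hweight : ∀ n : ℕ, 1 ≤ n → (n : ℝ) ^ (ω - 1 / k) = n ^ β * n ^ ((1 / c - 1) / k) := by
    intro n hn
    rw [← Real.rpow_add (by exact_mod_cast hn), hβ]
    ring_nf
  rw [show (fun n : ℕ => (n : ℝ) ^ β) = fun n : ℕ => (n : ℝ) ^ β * 1 by simp only [mul_one],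
    expSum_congr_weight (Npow k) hweight, expSum_rpow_mul, expSum_rpow_mul, Finset.mul_sum,
    ← Finset.sum_sub_distrib, Finset.sum_congr rfl fun n _ => by rw [mul_smul_comm, ← smul_sub]]
  refine (norm_sum_Icc_rpow_smul_le hδ (θ := 1 / (c * k) - P) (C := max C₁ 1) ?_ _
    (fun m hm => ?_) ⌊x⌋₊).trans ?_
  · linarith [le_max_left (ω - P) 0]
  · have hA := expSum_sub_mul_expSum (NPSpow c k) (Npow k) (fun _ => 1)
      (fun n => (n : ℝ) ^ ((1 / c - 1) / k)) (1 / c) α m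
    rw [Nat.floor_natCast] at hA
    rw [← hA]
    exact (hC₁ α hα m hm).trans (by gcongr; exact le_max_left _ _)
  · gcongr
    exact Nat.floor_le (by linarith)

/-- Weighted transfer estimate from `N_(c)^k` to `N^k`. -/
theorem stmt12 (k : ℕ) (hk : 2 ≤ k) (c : ℝ) (hc1 : 1 < c) (hcni : ∀ m : ℤ, c ≠ (m : ℝ))
    (P : ℝ) (hP0 : 0 < P) (hP1 : P ≤ 1 / (c * k)) (hPSW : PSW c k P)
    (ω : ℝ) :
    ∀ ε > (0:ℝ), ∃ C > (0:ℝ), ∀ α ∈ Set.Ico (0:ℝ) 1, ∀ x : ℝ, 2 ≤ x →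
      ‖(expSum (NPSpow c k) (fun n => (n : ℝ) ^ (ω - 1 / (c * k))) α x
          - (1 / c) * expSum (Npow k) (fun n => (n : ℝ) ^ (ω - 1 / k)) α x)‖
        ≤ C * x ^ (max (ω - P) 0 + ε) :=
  stmt12_general k c P hPSW ω
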